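/- Let ρ : Hom(ℂ³, ℂ²) → 𝔰𝔭(1) ≅ 𝔰𝔩₂ be the map ρ(i) = i∘i*, where ℂ³ carries the standard orthogonal form, ℂ² the standard symplectic form, and i* is the right adjoint of i. Then the ring of Sp(1)-invariant functions on the scheme-theoretic fiber ρ^{-1}(0) (cut out by the 3 entries of i∘i* as polynomials on Hom(ℂ³,ℂ²) ≅ ℂ⁶) is isomorphic, as a graded ring, to ℂ[x,y,z]/(x,y,z)², i.e. it is 4-dimensional, spanned by 1 and three elements of degree 2. In particular ρ^{-1}(0)//Sp(1) is a non-reduced scheme whose reduction is a point. -/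

import Mathlib

set_option synthInstance.maxHeartbeats 1000000
set_option maxHeartbeats 1000000
open MvPolynomial

/-- the coordinate ring of `Hom(ℂ³,ℂ²) ≅ ℂ⁶`, with variables `X (r,c)` = the `(r,c)` matrix
entry of `i`. -/
noncomputable abbrev PolyHom := MvPolynomial (Fin 2 × Fin 3) ℂ

/-- the generic matrix of coordinate functions. -/
noncomputable def iGen : Matrix (Fin 2) (Fin 3) PolyHom := fun r c => X (r, c)

/-- the standard symplectic matrix `J` on `ℂ²` (entries viewed as constants). -/
noncomputable def Jmat : Matrix (Fin 2) (Fin 2) PolyHom :=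
  (Matrix.of ![![0, 1], ![-1, 0]]).map (C : ℂ →+* PolyHom)

/-- the entries of `ρ(i) = i∘i* = i·iᵀ·J` as polynomials on `Hom(ℂ³,ℂ²)`. -/
noncomputable def rhoMat : Matrix (Fin 2) (Fin 2) PolyHom := iGen * iGen.transpose * Jmat

/-- the defining ideal of the scheme-theoretic fiber `ρ⁻¹(0)`. -/
noncomputable def rhoIdeal : Ideal PolyHom :=
  Ideal.span (Set.range fun p : Fin 2 × Fin 2 => rhoMat p.1 p.2)

/-- the action of `g ∈ Sp(1) = SL(2,ℂ)` on polynomial functions on `Hom(ℂ³,ℂ²)` (by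
postcomposition on maps: `(g•f)(i) = f(g⁻¹·i)`). -/
noncomputable def spAct (g : Matrix.SpecialLinearGroup (Fin 2) ℂ) : PolyHom →ₐ[ℂ] PolyHom :=
  aeval fun p : Fin 2 × Fin 3 =>
    ∑ s : Fin 2, C ((g⁻¹ : Matrix.SpecialLinearGroup (Fin 2) ℂ) p.1 s) * X (s, p.2)

/-- the subalgebra of `Sp(1)`-invariant polynomials on `Hom(ℂ³,ℂ²)`. -/
noncomputable def spInv : Subalgebra ℂ PolyHom where
  carrier := {f | ∀ g, spAct g f = f}
  add_mem' := by intro a b ha hb g; simp [map_add, ha g, hb g]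
  mul_mem' := by intro a b ha hb g; simp [map_mul, ha g, hb g]
  algebraMap_mem' := by intro r g; simp [spAct]

/-- the ideal of relations among invariants coming from `ρ⁻¹(0)`. -/
noncomputable def spInvIdeal : Ideal spInv := Ideal.comap (Subalgebra.val spInv) rhoIdeal

/-!
Write `x, y ∈ ℂ³` for the rows of `i`. Then `ρ(i) = 0` says `x·x = x·y = y·y = 0`, and the
`2 × 2` minors of `i` are the coordinates of `w = x × y`.

By the first fundamental theorem for `SL₂` the invariants are the polynomials in `w`: a generic
`i` is moved by `SL₂` to `!![1, 0, -w₀/w₂; 0, w₂, -w₁]`, so `f · w₂ᴺ` is a polynomial in `w`, and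
the powers of `w₂` cancel because on `{w₂ = 0}` the minors take every value `(a, b, 0)`.

Modulo the equations every product `wᵢ wⱼ` vanishes, by the expansion of `(x × y)(x × y)ᵀ` in the
Gram entries. On the other hand `1, w₀, w₁, w₂` stay independent: constants do by degree, and in
degree `2` the relations are `ℂ`-combinations of the Gram entries, which `y ↦ -y` fixes when
`x ⊥ y`, whereas it negates `w`. Hence the invariant ring of the fibre is
`ℂ[w]/(w)² ≅ ℂ ⊕ ℂ³`.
-/

namespace MvPolynomial

variable {σ R : Type*} [CommRing R]

lemma forall_degree_lt_two_coeff_eq_zero_iff [DecidableEq σ] (P : MvPolynomial σ R) :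
    (∀ x : σ →₀ ℕ, x.degree < 2 → coeff x P = 0) ↔
      coeff 0 P = 0 ∧ ∀ i, coeff (Finsupp.single i 1) P = 0 := by
  refine ⟨fun h => ⟨h 0 (by simp), fun i => h _ (by simp)⟩, fun ⟨h0, h1⟩ x hx => ?_⟩
  obtain hx | hx : x.degree = 0 ∨ x.degree = 1 := by omega
  · rwa [(Finsupp.degree_eq_zero_iff x).mp hx]
  · obtain ⟨i, rfl⟩ : x ∈ Set.range fun i : σ => Finsupp.single i 1 := by
      rw [Finsupp.range_single_one]; exact hx
    exact h1 i

lemma sub_linearPart_mem_idealOfVars_sq [Fintype σ] [DecidableEq σ] (P : MvPolynomial σ R) :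
    P - (C (coeff 0 P) + ∑ i, C (coeff (Finsupp.single i 1) P) * X i) ∈ idealOfVars σ R ^ 2 := by
  rw [mem_pow_idealOfVars_iff', forall_degree_lt_two_coeff_eq_zero_iff]
  refine ⟨by simp [coeff_sum, coeff_C_mul, coeff_X], fun i => ?_⟩
  simp [coeff_sum, coeff_C_mul, coeff_X, Finsupp.single_eq_single_iff,
    (Finsupp.single_ne_zero.mpr one_ne_zero).symm]

lemma ker_eq_idealOfVars_sq [Fintype σ] {A : Type*} [CommRing A] [Algebra R A]
    (φ : MvPolynomial σ R →ₐ[R] A) (hsq : ∀ i j, φ (X i * X j) = 0)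
    (hind : ∀ (c : R) (v : σ → R), algebraMap R A c + ∑ i, v i • φ (X i) = 0 → c = 0 ∧ v = 0) :
    RingHom.ker φ = idealOfVars σ R ^ 2 := by
  classical
  have hle : idealOfVars σ R ^ 2 ≤ RingHom.ker φ := by
    rw [idealOfVars, sq, Ideal.span_mul_span', Ideal.span_le]
    rintro _ ⟨_, ⟨i, rfl⟩, _, ⟨j, rfl⟩, rfl⟩
    exact hsq i j
  refine le_antisymm (fun P hP => ?_) hle
  have hrest := sub_linearPart_mem_idealOfVars_sq P
  obtain ⟨hc, hv⟩ := hind (coeff 0 P) (fun i => coeff (Finsupp.single i 1) P) <| by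
    have := hle hrest
    rw [RingHom.mem_ker, map_sub, hP, zero_sub, neg_eq_zero] at this
    simpa [Algebra.smul_def] using this
  simpa [hc, congrFun hv] using hrest

section TrivSqZeroExt

open TrivSqZeroExt

variable [Fintype σ] [DecidableEq σ]

noncomputable def toTrivSqZeroExt : MvPolynomial σ R →ₐ[R] TrivSqZeroExt R (σ → R) :=
  aeval fun i => inr (Pi.single i 1)

lemma inl_add_sum_smul_toTrivSqZeroExt_X (c : R) (v : σ → R) :
    algebraMap R _ c + ∑ i, v i • toTrivSqZeroExt (X i : MvPolynomial σ R) = inl c + inr v := by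
  ext j
  · simp [toTrivSqZeroExt, fst_sum, algebraMap_eq_inl]
  · simp [toTrivSqZeroExt, snd_sum, algebraMap_eq_inl, Finset.sum_apply, Pi.single_apply]

lemma toTrivSqZeroExt_surjective :
    Function.Surjective (toTrivSqZeroExt : MvPolynomial σ R →ₐ[R] _) := by
  intro x
  refine ⟨C x.fst + ∑ i, C (x.snd i) * X i, ?_⟩
  simp only [map_add, map_sum, map_mul, algHom_C, ← Algebra.smul_def,
    inl_add_sum_smul_toTrivSqZeroExt_X, inl_fst_add_inr_snd_eq]

lemma ker_toTrivSqZeroExt :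
    RingHom.ker (toTrivSqZeroExt : MvPolynomial σ R →ₐ[R] _) = idealOfVars σ R ^ 2 := by
  refine ker_eq_idealOfVars_sq _ (fun i j => by simp [toTrivSqZeroExt]) fun c v h => ?_
  rw [inl_add_sum_smul_toTrivSqZeroExt_X] at h
  exact ⟨by simpa using congrArg fst h, by simpa using congrArg snd h⟩

noncomputable def quotientIdealOfVarsSqEquiv :
    (MvPolynomial σ R ⧸ idealOfVars σ R ^ 2) ≃ₐ[R] TrivSqZeroExt R (σ → R) :=
  (Ideal.quotientEquivAlgOfEq R ker_toTrivSqZeroExt.symm).trans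
    (Ideal.quotientKerAlgEquivOfSurjective toTrivSqZeroExt_surjective)

end TrivSqZeroExt

lemma X_dvd_sub_bind₁_update_zero [DecidableEq σ] (P : MvPolynomial σ R) (j : σ) :
    X j ∣ P - bind₁ (Function.update X j 0) P := by
  induction P using MvPolynomial.induction_on with
  | C a => simp
  | add p q hp hq => rw [map_add, add_sub_add_comm]; exact dvd_add hp hq
  | mul_X p k hp =>
    rw [map_mul, bind₁_X_right]
    obtain rfl | hk := eq_or_ne k j
    · simp
    · rw [Function.update_of_ne hk, ← sub_mul]
      exact dvd_mul_of_dvd_left hp _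

lemma X_dvd_of_eval_update_eq_zero [IsDomain R] [Infinite R] [DecidableEq σ]
    {P : MvPolynomial σ R} {j : σ} (h : ∀ z, eval (Function.update z j 0) P = 0) : X j ∣ P := by
  have hP : bind₁ (Function.update (X : σ → MvPolynomial σ R) j 0) P = 0 := by
    refine MvPolynomial.funext fun z => ?_
    rw [map_zero, eval, eval₂Hom_bind₁, ← h z, eval]
    congr 2
    funext k
    by_cases hk : k = j <;> simp [hk]
  simpa [hP] using X_dvd_sub_bind₁_update_zero P j

lemma exists_pow_mul_eval_update_div {K : Type*} [Field K] [DecidableEq σ]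
    (P : MvPolynomial σ K) (i j : σ) :
    ∃ (N : ℕ) (Q : MvPolynomial σ K), ∀ z : σ → K, z j ≠ 0 →
      z j ^ N * eval (Function.update z i (z i / z j)) P = eval z Q := by
  induction P using MvPolynomial.induction_on with
  | C a => exact ⟨0, C a, by simp⟩
  | add p q hp hq =>
    obtain ⟨N₁, Q₁, h₁⟩ := hp
    obtain ⟨N₂, Q₂, h₂⟩ := hq
    refine ⟨N₁ + N₂, X j ^ N₂ * Q₁ + X j ^ N₁ * Q₂, fun z hz => ?_⟩
    simp only [map_add, map_mul, map_pow, eval_X, ← h₁ z hz, ← h₂ z hz]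
    ring
  | mul_X p k hp =>
    obtain ⟨N, Q, h⟩ := hp
    obtain rfl | hk := eq_or_ne k i
    · refine ⟨N + 1, Q * X k, fun z hz => ?_⟩
      simp only [map_mul, eval_X, Function.update_self, ← h z hz]
      field_simp
      ring
    · refine ⟨N, Q * X k, fun z hz => ?_⟩
      simp only [map_mul, eval_X, Function.update_of_ne hk, ← h z hz]
      ring

lemma homogeneousComponent_mul_of_isHomogeneous (p : MvPolynomial σ R) {q : MvPolynomial σ R}
    {n : ℕ} (hq : q.IsHomogeneous n) : homogeneousComponent n (p * q) = C (coeff 0 p) * q := by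
  conv_lhs => rw [← sum_homogeneousComponent p]
  rw [Finset.sum_mul, map_sum, Finset.sum_eq_single 0]
  · rw [homogeneousComponent_zero, homogeneousComponent_C_mul, homogeneousComponent_eq_self hq]
  · intro k _ hk
    rw [homogeneousComponent_of_mem ((homogeneousComponent_isHomogeneous k p).mul hq),
      if_neg (by omega)]
  · simp

lemma homogeneousComponent_mem_span_of_mem_ideal_span {ι : Type*} [Fintype ι]
    {g : ι → MvPolynomial σ R} {n : ℕ} (hg : ∀ i, (g i).IsHomogeneous n) {f : MvPolynomial σ R}
    (hf : f ∈ Ideal.span (Set.range g)) :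
    homogeneousComponent n f ∈ Submodule.span R (Set.range g) := by
  obtain ⟨c, rfl⟩ := (Submodule.mem_span_range_iff_exists_fun _).mp hf
  rw [map_sum]
  refine Submodule.sum_mem _ fun i _ => ?_
  rw [smul_eq_mul, homogeneousComponent_mul_of_isHomogeneous _ (hg i), C_mul']
  exact Submodule.smul_mem _ _ (Submodule.subset_span ⟨i, rfl⟩)

lemma coeff_zero_eq_zero_of_mem_ideal_span {s : Set (MvPolynomial σ R)} {n : ℕ} (hn : n ≠ 0)
    (hs : ∀ q ∈ s, q.IsHomogeneous n) {f : MvPolynomial σ R} (hf : f ∈ Ideal.span s) :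
    coeff 0 f = 0 := by
  have : Ideal.span s ≤ RingHom.ker (constantCoeff : MvPolynomial σ R →+* R) :=
    Ideal.span_le.mpr fun q hq => (hs q hq).coeff_eq_zero (by simpa using hn.symm)
  rw [← constantCoeff_eq]
  exact this hf

lemma eq_of_eval_eq_of_eval_ne_zero [IsDomain R] [Infinite R] {p₁ p₂ q : MvPolynomial σ R}
    (hq : q ≠ 0) (h : ∀ x, eval x q ≠ 0 → eval x p₁ = eval x p₂) : p₁ = p₂ := by
  have : (p₁ - p₂) * q = 0 := MvPolynomial.funext fun x => by
    by_cases hx : eval x q = 0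
    · simp [hx]
    · simp [h x hx]
  exact sub_eq_zero.mp ((mul_eq_zero.mp this).resolve_right hq)

end MvPolynomial

open scoped Matrix

lemma cross_mul_cross {R : Type*} [CommRing R] (x y : Fin 3 → R) (i j : Fin 3) :
    (x ⨯₃ y) i * (x ⨯₃ y) j =
      (if i = j then x ⬝ᵥ x * (y ⬝ᵥ y) - (x ⬝ᵥ y) ^ 2 else 0)
        - x ⬝ᵥ x * (y i * y j) - y ⬝ᵥ y * (x i * x j) + x ⬝ᵥ y * (x i * y j + y i * x j) := by
  fin_cases i <;> fin_cases j <;> simp [cross_apply, dotProduct, Fin.sum_univ_three] <;> ring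

lemma cross_rows_mul_eq_det_smul {R : Type*} [CommRing R] (A : Matrix (Fin 2) (Fin 2) R)
    (V : Matrix (Fin 2) (Fin 3) R) : (A * V) 0 ⨯₃ (A * V) 1 = A.det • (V 0 ⨯₃ V 1) := by
  ext k
  fin_cases k <;>
    simp [cross_apply, Matrix.mul_apply, Fin.sum_univ_two, Matrix.det_fin_two] <;> ring

lemma map_cross_apply {R S F : Type*} [CommRing R] [CommRing S] [FunLike F R S] [RingHomClass F R S]
    (f : F) (x y : Fin 3 → R) (k : Fin 3) : f ((x ⨯₃ y) k) = ((f ∘ x) ⨯₃ (f ∘ y)) k := by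
  fin_cases k <;> simp [cross_apply]

noncomputable def minors : Fin 3 → PolyHom := iGen 0 ⨯₃ iGen 1

noncomputable def evalMat (M : Matrix (Fin 2) (Fin 3) ℂ) : PolyHom →ₐ[ℂ] ℂ :=
  aeval fun p => M p.1 p.2

lemma evalMat_comp_iGen (M : Matrix (Fin 2) (Fin 3) ℂ) (r : Fin 2) : evalMat M ∘ iGen r = M r := by
  funext c
  simp [evalMat, iGen]

lemma evalMat_minors (M : Matrix (Fin 2) (Fin 3) ℂ) (k : Fin 3) :
    evalMat M (minors k) = (M 0 ⨯₃ M 1) k := by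
  rw [minors, map_cross_apply, evalMat_comp_iGen, evalMat_comp_iGen]

lemma evalMat_aeval_minors (M : Matrix (Fin 2) (Fin 3) ℂ) (P : MvPolynomial (Fin 3) ℂ) :
    evalMat M (aeval minors P) = eval (M 0 ⨯₃ M 1) P := by
  rw [← AlgHom.comp_apply, comp_aeval, ← coe_aeval_eq_eval]
  simp [evalMat_minors]

lemma rhoMat_eq : rhoMat =
    !![-(iGen 0 ⬝ᵥ iGen 1), iGen 0 ⬝ᵥ iGen 0; -(iGen 1 ⬝ᵥ iGen 1), iGen 1 ⬝ᵥ iGen 0] := by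
  ext r s
  fin_cases r <;> fin_cases s <;>
    simp [rhoMat, Jmat, Matrix.mul_apply, Fin.sum_univ_two, dotProduct]

lemma evalMat_rhoMat (M : Matrix (Fin 2) (Fin 3) ℂ) (r s : Fin 2) :
    evalMat M (rhoMat r s) = !![-(M 0 ⬝ᵥ M 1), M 0 ⬝ᵥ M 0; -(M 1 ⬝ᵥ M 1), M 1 ⬝ᵥ M 0] r s := by
  have h (a b : Fin 2) : evalMat M (iGen a ⬝ᵥ iGen b) = M a ⬝ᵥ M b := by
    rw [← AlgHom.coe_toRingHom, RingHom.map_dotProduct]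
    simp only [AlgHom.coe_toRingHom, evalMat_comp_iGen]
  rw [rhoMat_eq]
  fin_cases r <;> fin_cases s <;> simp [h]

lemma evalMat_spAct (g : Matrix.SpecialLinearGroup (Fin 2) ℂ) (M : Matrix (Fin 2) (Fin 3) ℂ)
    (f : PolyHom) : evalMat M (spAct g⁻¹ f) = evalMat ((g : Matrix (Fin 2) (Fin 2) ℂ) * M) f := by
  rw [spAct, ← AlgHom.comp_apply, comp_aeval, evalMat]
  congr 2
  funext p
  simp only [map_sum, map_mul, aeval_C, aeval_X, inv_inv, Matrix.mul_apply,
    Algebra.algebraMap_self, RingHom.id_apply]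

lemma evalMat_mul_of_mem_spInv {f : PolyHom} (hf : f ∈ spInv)
    (g : Matrix.SpecialLinearGroup (Fin 2) ℂ) (M : Matrix (Fin 2) (Fin 3) ℂ) :
    evalMat ((g : Matrix (Fin 2) (Fin 2) ℂ) * M) f = evalMat M f := by
  rw [← evalMat_spAct, hf]

lemma spAct_minors (g : Matrix.SpecialLinearGroup (Fin 2) ℂ) (k : Fin 3) :
    spAct g (minors k) = minors k := by
  have hrows : iGen.map (spAct g) = ((g⁻¹ : Matrix.SpecialLinearGroup (Fin 2) ℂ) :
      Matrix (Fin 2) (Fin 2) ℂ).map (C : ℂ →+* PolyHom) * iGen := by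
    ext1 r c
    simp only [Matrix.map_apply, spAct, iGen, aeval_X, Matrix.mul_apply]
  rw [minors, map_cross_apply]
  change ((iGen.map (spAct g)) 0 ⨯₃ (iGen.map (spAct g)) 1) k = _
  rw [hrows, cross_rows_mul_eq_det_smul, ← RingHom.mapMatrix_apply, ← RingHom.map_det,
    Matrix.SpecialLinearGroup.det_coe, map_one, one_smul]

lemma eq_of_evalMat_eq_of_evalMat_ne_zero {p₁ p₂ q : PolyHom} (hq : q ≠ 0)
    (h : ∀ M, evalMat M q ≠ 0 → evalMat M p₁ = evalMat M p₂) : p₁ = p₂ :=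
  eq_of_eval_eq_of_eval_ne_zero hq fun m => h (Matrix.of fun r c => m (r, c))

lemma minors_two_ne_zero : minors 2 ≠ 0 := by
  intro h
  have := congrArg (evalMat !![1, 0, 0; 0, 1, 0]) h
  simp [evalMat_minors, cross_apply] at this

-- Its rows have cross product `(z₀ z₂, z₁, z₂)`.
def sliceMat {R : Type*} [CommRing R] (z : Fin 3 → R) : Matrix (Fin 2) (Fin 3) R :=
  !![1, 0, -z 0; 0, z 2, -z 1]

lemma eval_bind₁_sliceMat (f : PolyHom) (z : Fin 3 → ℂ) :
    eval z (bind₁ (fun p => sliceMat X p.1 p.2) f) = evalMat (sliceMat z) f := by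
  rw [eval, eval₂Hom_bind₁, evalMat]
  congr 2
  funext ⟨r, c⟩
  fin_cases r <;> fin_cases c <;> simp [sliceMat]

lemma exists_mul_eq_sliceMat (M : Matrix (Fin 2) (Fin 3) ℂ) (hM : (M 0 ⨯₃ M 1) 2 ≠ 0) :
    ∃ g : Matrix.SpecialLinearGroup (Fin 2) ℂ, (g : Matrix (Fin 2) (Fin 2) ℂ) * M =
      sliceMat (Function.update (M 0 ⨯₃ M 1) 0 ((M 0 ⨯₃ M 1) 0 / (M 0 ⨯₃ M 1) 2)) := by
  have hd : M 0 0 * M 1 1 - M 0 1 * M 1 0 ≠ 0 := by simpa [cross_apply] using hM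
  have hdet : M 1 1 / (M 0 0 * M 1 1 - M 0 1 * M 1 0) * M 0 0
      - -M 0 1 / (M 0 0 * M 1 1 - M 0 1 * M 1 0) * -M 1 0 = 1 := by
    rw [div_mul_eq_mul_div, div_mul_eq_mul_div, ← sub_div, div_eq_one_iff_eq hd]
    ring
  refine ⟨⟨!![M 1 1 / (M 0 0 * M 1 1 - M 0 1 * M 1 0), -M 0 1 / (M 0 0 * M 1 1 - M 0 1 * M 1 0);
    -M 1 0, M 0 0], by rwa [Matrix.det_fin_two_of]⟩, ?_⟩
  ext r c
  fin_cases r <;> fin_cases c <;> simp [sliceMat, Matrix.mul_apply, Fin.sum_univ_two, cross_apply]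
  · linear_combination hdet
  all_goals field_simp
  all_goals ring

lemma exists_mul_pow_eq_aeval_minors {f : PolyHom} (hf : f ∈ spInv) :
    ∃ (N : ℕ) (P : MvPolynomial (Fin 3) ℂ), f * minors 2 ^ N = aeval minors P := by
  obtain ⟨N, P, hP⟩ :=
    exists_pow_mul_eval_update_div (bind₁ (fun p => sliceMat X p.1 p.2) f) 0 2
  refine ⟨N, P, eq_of_evalMat_eq_of_evalMat_ne_zero minors_two_ne_zero fun M hM => ?_⟩
  rw [evalMat_minors] at hM
  obtain ⟨g, hg⟩ := exists_mul_eq_sliceMat M hM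
  rw [map_mul, map_pow, evalMat_minors, evalMat_aeval_minors, ← hP _ hM,
    ← evalMat_mul_of_mem_spInv hf g, hg, eval_bind₁_sliceMat, mul_comm]

lemma exists_eq_aeval_minors_of_mul_pow_eq {f : PolyHom} :
    ∀ {N : ℕ} {P : MvPolynomial (Fin 3) ℂ}, f * minors 2 ^ N = aeval minors P →
      ∃ Q : MvPolynomial (Fin 3) ℂ, f = aeval minors Q
  | 0, P, h => ⟨P, by simpa using h⟩
  | N + 1, P, h => by
    obtain ⟨P', rfl⟩ : X 2 ∣ P := X_dvd_of_eval_update_eq_zero fun z => by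
      have := congrArg (evalMat !![-z 1, z 0, 0; 0, 0, 1]) h
      have hw : !![-z 1, z 0, 0; 0, 0, 1] 0 ⨯₃ !![-z 1, z 0, 0; 0, 0, 1] 1 =
          Function.update z 2 0 := by
        ext k
        fin_cases k <;> simp [cross_apply]
      rw [evalMat_aeval_minors, map_mul, map_pow, evalMat_minors, hw] at this
      simpa using this.symm
    rw [map_mul, aeval_X] at h
    have h' : f * minors 2 ^ N = aeval minors P' :=
      mul_left_cancel₀ minors_two_ne_zero (by rw [← h]; ring)
    exact exists_eq_aeval_minors_of_mul_pow_eq h'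

theorem exists_eq_aeval_minors {f : PolyHom} (hf : f ∈ spInv) :
    ∃ Q : MvPolynomial (Fin 3) ℂ, f = aeval minors Q := by
  obtain ⟨N, P, h⟩ := exists_mul_pow_eq_aeval_minors hf
  exact exists_eq_aeval_minors_of_mul_pow_eq h

lemma dotProduct_iGen_mem (r s : Fin 2) : iGen r ⬝ᵥ iGen s ∈ rhoIdeal := by
  have h (a b : Fin 2) : rhoMat a b ∈ rhoIdeal := Ideal.subset_span ⟨(a, b), rfl⟩
  simp only [rhoMat_eq] at h
  fin_cases r <;> fin_cases s
  · simpa using h 0 1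
  · simpa using h 0 0
  · simpa [dotProduct_comm] using h 0 0
  · simpa using h 1 0

lemma minors_mul_minors_mem (i j : Fin 3) : minors i * minors j ∈ rhoIdeal := by
  have h (r s : Fin 2) : Ideal.Quotient.mk rhoIdeal (iGen r ⬝ᵥ iGen s) = 0 :=
    Ideal.Quotient.eq_zero_iff_mem.mpr (dotProduct_iGen_mem r s)
  rw [← Ideal.Quotient.eq_zero_iff_mem, minors, cross_mul_cross]
  simp [h, apply_ite]

lemma isHomogeneous_dotProduct_iGen (r s : Fin 2) : (iGen r ⬝ᵥ iGen s).IsHomogeneous 2 :=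
  IsHomogeneous.sum _ _ _ fun _ _ => (isHomogeneous_X ℂ _).mul (isHomogeneous_X ℂ _)

lemma isHomogeneous_rhoMat (r s : Fin 2) : (rhoMat r s).IsHomogeneous 2 := by
  have h := isHomogeneous_dotProduct_iGen
  rw [rhoMat_eq]
  fin_cases r <;> fin_cases s
  exacts [(h 0 1).neg, h 0 0, (h 1 1).neg, h 1 0]

lemma isHomogeneous_minors (k : Fin 3) : (minors k).IsHomogeneous 2 := by
  have h (r c) : (iGen r c).IsHomogeneous 1 := isHomogeneous_X ℂ _
  fin_cases k <;> exact ((h _ _).mul (h _ _)).sub ((h _ _).mul (h _ _))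

-- `y ↦ -y` fixes the Gram entries of `(x, y)` when `x ⊥ y`, but negates `x ⨯₃ y`.
lemma dotProduct_cross_eq_zero_of_mem_span {v : Fin 3 → ℂ}
    (hv : ∑ k, C (v k) * minors k ∈ Submodule.span ℂ (Set.range fun p : Fin 2 × Fin 2 =>
      rhoMat p.1 p.2))
    (x y : Fin 3 → ℂ) (hxy : x ⬝ᵥ y = 0) : v ⬝ᵥ (x ⨯₃ y) = 0 := by
  have hmin (y : Fin 3 → ℂ) (k : Fin 3) :
      evalMat (Matrix.of ![x, y]) (minors k) = (x ⨯₃ y) k := evalMat_minors _ k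
  have hrho (y : Fin 3 → ℂ) (r s : Fin 2) : evalMat (Matrix.of ![x, y]) (rhoMat r s) =
      !![-(x ⬝ᵥ y), x ⬝ᵥ x; -(y ⬝ᵥ y), y ⬝ᵥ x] r s := evalMat_rhoMat _ r s
  have := LinearMap.eqOn_span (f := (evalMat (Matrix.of ![x, y])).toLinearMap)
    (g := (evalMat (Matrix.of ![x, -y])).toLinearMap) ?_ hv
  · simp [map_sum, hmin] at this
    rw [dotProduct]
    linear_combination this / 2
  · rintro _ ⟨⟨r, s⟩, rfl⟩
    simp only [AlgHom.toLinearMap_apply, hrho]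
    fin_cases r <;> fin_cases s <;> simp [hxy, dotProduct_comm]

lemma eq_zero_of_add_sum_minors_mem {c : ℂ} {v : Fin 3 → ℂ}
    (h : C c + ∑ k, C (v k) * minors k ∈ rhoIdeal) : c = 0 ∧ v = 0 := by
  have hgen (p : Fin 2 × Fin 2) : (rhoMat p.1 p.2).IsHomogeneous 2 := isHomogeneous_rhoMat _ _
  have hquad : (∑ k, C (v k) * minors k).IsHomogeneous 2 :=
    IsHomogeneous.sum _ _ _ fun k _ => by
      simpa using (isHomogeneous_C _ (v k)).mul (isHomogeneous_minors k)
  refine ⟨?_, ?_⟩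
  · have := coeff_zero_eq_zero_of_mem_ideal_span two_ne_zero
      (by rintro _ ⟨p, rfl⟩; exact hgen p) h
    simpa [hquad.coeff_eq_zero] using this
  have hspan := homogeneousComponent_mem_span_of_mem_ideal_span hgen h
  rw [map_add, homogeneousComponent_of_mem (isHomogeneous_C _ c), if_neg two_ne_zero,
    homogeneousComponent_eq_self hquad, zero_add] at hspan
  funext k
  have := dotProduct_cross_eq_zero_of_mem_span hspan (Pi.single (k + 1) 1) (Pi.single (k + 2) 1)
    (by fin_cases k <;> simp)
  fin_cases k <;> simpa [cross_apply, dotProduct, Fin.sum_univ_three] using this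

noncomputable def minorsInv (k : Fin 3) : spInv := ⟨minors k, fun g => spAct_minors g k⟩

noncomputable def quotientOfMinors : MvPolynomial (Fin 3) ℂ →ₐ[ℂ] spInv ⧸ spInvIdeal :=
  (Ideal.Quotient.mkₐ ℂ spInvIdeal).comp (aeval minorsInv)

lemma val_aeval_minorsInv (P : MvPolynomial (Fin 3) ℂ) :
    spInv.val (aeval minorsInv P) = aeval minors P := by
  rw [← AlgHom.comp_apply, comp_aeval]
  rfl

lemma quotientOfMinors_eq_zero_iff (P : MvPolynomial (Fin 3) ℂ) :
    quotientOfMinors P = 0 ↔ aeval minors P ∈ rhoIdeal := by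
  rw [quotientOfMinors, AlgHom.comp_apply, Ideal.Quotient.mkₐ_eq_mk,
    Ideal.Quotient.eq_zero_iff_mem, spInvIdeal, Ideal.mem_comap, val_aeval_minorsInv]

lemma quotientOfMinors_surjective : Function.Surjective quotientOfMinors := by
  intro y
  obtain ⟨f, rfl⟩ := Ideal.Quotient.mkₐ_surjective ℂ spInvIdeal y
  obtain ⟨Q, hQ⟩ := exists_eq_aeval_minors f.2
  refine ⟨Q, congrArg _ (Subtype.ext ?_)⟩
  rw [hQ]
  exact val_aeval_minorsInv Q

lemma ker_quotientOfMinors : RingHom.ker quotientOfMinors = idealOfVars (Fin 3) ℂ ^ 2 := by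
  refine ker_eq_idealOfVars_sq (A := spInv ⧸ spInvIdeal) quotientOfMinors (fun i j => ?_)
    fun c v h => eq_zero_of_add_sum_minors_mem ?_
  · rw [quotientOfMinors_eq_zero_iff, map_mul, aeval_X, aeval_X]
    exact minors_mul_minors_mem i j
  · have : quotientOfMinors (C c + ∑ i, C (v i) * X i) = 0 := by
      simpa [Algebra.smul_def, algebraMap_eq] using h
    simpa using (quotientOfMinors_eq_zero_iff _).mp this

noncomputable def invariantQuotientEquiv :
    (spInv ⧸ spInvIdeal) ≃ₐ[ℂ] (MvPolynomial (Fin 3) ℂ ⧸ idealOfVars (Fin 3) ℂ ^ 2) :=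
  ((Ideal.quotientEquivAlgOfEq ℂ ker_quotientOfMinors.symm).trans
    (Ideal.quotientKerAlgEquivOfSurjective quotientOfMinors_surjective)).symm

theorem stmt15 :
    Nonempty ((spInv ⧸ spInvIdeal) ≃ₐ[ℂ]
      (MvPolynomial (Fin 3) ℂ ⧸ (Ideal.span (Set.range (X : Fin 3 → MvPolynomial (Fin 3) ℂ))) ^ 2)) ∧
    Module.finrank ℂ (spInv ⧸ spInvIdeal) = 4 ∧
    (∃ a : spInv ⧸ spInvIdeal, a ≠ 0 ∧ a * a = 0) := by
  let e := invariantQuotientEquiv.trans quotientIdealOfVarsSqEquiv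
  refine ⟨⟨invariantQuotientEquiv⟩, ?_, e.symm (TrivSqZeroExt.inr (Pi.single 0 1)), ?_, ?_⟩
  · rw [e.toLinearEquiv.finrank_eq]
    change Module.finrank ℂ (ℂ × (Fin 3 → ℂ)) = 4
    simp
  · rw [ne_eq, map_eq_zero_iff _ e.symm.injective, ← TrivSqZeroExt.inr_zero]
    exact TrivSqZeroExt.inr_injective.ne (Pi.single_ne_zero_iff.mpr one_ne_zero)
  · rw [← map_mul, TrivSqZeroExt.inr_mul_inr, map_zero]
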